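/- Let H = H1 ⊗ H2 with dim H1 = n1, dim H2 = n2, let ψ ∈ H be a unit vector, and let a = |ψ⟩⟨ψ| be the corresponding atom. Then a is factorized (a = b ⊗ c for some effects b on H1, c on H2) if and only if both reduced effects a^1 and a^2 are indecomposable, where an effect is indecomposable if it has the form λ·|φ⟩⟨φ| for some unit vector φ and some λ ∈ [0,1]. -/

import Mathlib

/-!
A unit vector `ψ` gives a factorized atom exactly when it is a product vector `φ ⊗ χ`, and then
`a = |φ⟩⟨φ| ⊗ |χ⟩⟨χ|` with reduced effects `(1/n₂)|φ⟩⟨φ|` and `(1/n₁)|χ⟩⟨χ|`.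
If `a = b ⊗ c`, dividing by one nonzero entry `ψ(i₀,k₀)` exhibits `ψ(i,k)` as `b i i₀ * c k k₀`
up to a constant, a product. Conversely, if `a¹ = t|φ⟩⟨φ|`, comparing traces gives `t = 1/n₂`,
so the coefficient matrix `Ψ` of `ψ` satisfies `ΨΨᴴ = |φ⟩⟨φ|`; then `(1 - |φ⟩⟨φ|)Ψ = 0`, i.e.
every column of `Ψ` is a multiple of `φ`.
-/

open Matrix ComplexOrder Kronecker

/-- The partial trace over the second tensor factor. -/
noncomputable def ptrace2 {n₁ n₂ : Type*} [Fintype n₂] (a : Matrix (n₁ × n₂) (n₁ × n₂) ℂ) :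
    Matrix n₁ n₁ ℂ :=
  Matrix.of fun i j => ∑ k, a (i, k) (j, k)

/-- The partial trace over the first tensor factor. -/
noncomputable def ptrace1 {n₁ n₂ : Type*} [Fintype n₁] (a : Matrix (n₁ × n₂) (n₁ × n₂) ℂ) :
    Matrix n₂ n₂ ℂ :=
  Matrix.of fun i j => ∑ k, a (k, i) (k, j)

/-- An effect is indecomposable if it is `λ·|φ⟩⟨φ|` for a unit vector `φ` and `λ ∈ [0,1]`. -/
def Indecomposable {m : Type*} [Fintype m] (b : Matrix m m ℂ) : Prop :=
  ∃ (t : ℝ) (φ : m → ℂ), 0 ≤ t ∧ t ≤ 1 ∧ star φ ⬝ᵥ φ = 1 ∧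
    b = (t : ℂ) • Matrix.vecMulVec φ (star φ)

namespace Matrix

variable {R m n₁ n₂ : Type*}

lemma trace_vecMulVec_self_star [CommSemiring R] [Star R] [Fintype m] (φ : m → R) :
    (vecMulVec φ (star φ)).trace = star φ ⬝ᵥ φ := by
  rw [trace_vecMulVec, dotProduct_comm]

lemma vecMulVec_self_star_mul_self [Semiring R] [Star R] [Fintype m] {φ : m → R}
    (hφ : star φ ⬝ᵥ φ = 1) :
    vecMulVec φ (star φ) * vecMulVec φ (star φ) = vecMulVec φ (star φ) := by
  rw [vecMulVec_mul_vecMulVec, hφ, one_smul]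

lemma eq_of_smul_eq_smul_of_trace_eq_one [Field R] [Fintype m]
    {A B : Matrix m m R} {c d : R} (hc : c ≠ 0) (hA : A.trace = 1) (hB : B.trace = 1)
    (h : c • A = d • B) : A = B := by
  have hcd : c = d := by simpa [hA, hB] using congrArg trace h
  subst hcd
  exact smul_right_injective _ hc h

def kroneckerVec [Mul R] (φ : n₁ → R) (χ : n₂ → R) : n₁ × n₂ → R :=
  fun p => φ p.1 * χ p.2

lemma star_kroneckerVec [CommMonoid R] [StarMul R] (φ : n₁ → R) (χ : n₂ → R) :
    star (kroneckerVec φ χ) = kroneckerVec (star φ) (star χ) := by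
  ext p
  simp [kroneckerVec]

lemma kroneckerVec_dotProduct_kroneckerVec [CommSemiring R] [Fintype n₁] [Fintype n₂]
    (φ φ' : n₁ → R) (χ χ' : n₂ → R) :
    kroneckerVec φ χ ⬝ᵥ kroneckerVec φ' χ' = (φ ⬝ᵥ φ') * (χ ⬝ᵥ χ') := by
  simp only [dotProduct, kroneckerVec, Fintype.sum_prod_type, Finset.sum_mul_sum]
  exact Finset.sum_congr rfl fun _ _ => Finset.sum_congr rfl fun _ _ => by ring

lemma vecMulVec_kroneckerVec [CommSemiring R] (φ φ' : n₁ → R) (χ χ' : n₂ → R) :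
    vecMulVec (kroneckerVec φ χ) (kroneckerVec φ' χ') = vecMulVec φ φ' ⊗ₖ vecMulVec χ χ' := by
  ext ⟨i, k⟩ ⟨j, l⟩
  simp only [vecMulVec_apply, kroneckerVec, kroneckerMap_apply]
  ring

lemma kroneckerVec_inv_smul_smul [Field R] {c : R} (hc : c ≠ 0) (φ : n₁ → R) (χ : n₂ → R) :
    kroneckerVec (c⁻¹ • φ) (c • χ) = kroneckerVec φ χ := by
  ext p
  simp only [kroneckerVec, Pi.smul_apply, smul_eq_mul]
  field_simp

lemma exists_kroneckerVec_of_vecMulVec_eq_kronecker [Field R] [StarRing R]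
    {ψ : n₁ × n₂ → R} (hψ : ψ ≠ 0) {b : Matrix n₁ n₁ R} {c : Matrix n₂ n₂ R}
    (h : vecMulVec ψ (star ψ) = b ⊗ₖ c) : ∃ φ χ, ψ = kroneckerVec φ χ := by
  obtain ⟨⟨i₀, k₀⟩, hp⟩ := Function.ne_iff.mp hψ
  have hp' : star (ψ (i₀, k₀)) ≠ 0 := star_ne_zero.mpr hp
  refine ⟨fun i => b i i₀ / star (ψ (i₀, k₀)), fun k => c k k₀, funext fun ⟨i, k⟩ => ?_⟩
  have hik := congrFun (congrFun h (i, k)) (i₀, k₀)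
  simp only [vecMulVec_apply, Pi.star_apply, kroneckerMap_apply] at hik
  simp only [kroneckerVec]
  rw [div_mul_eq_mul_div, eq_div_iff hp', hik]

lemma exists_unit_kroneckerVec [Fintype n₁] [Fintype n₂]
    {φ : n₁ → ℂ} {χ : n₂ → ℂ} (h : star (kroneckerVec φ χ) ⬝ᵥ kroneckerVec φ χ = 1) :
    ∃ φ' χ', star φ' ⬝ᵥ φ' = 1 ∧ star χ' ⬝ᵥ χ' = 1 ∧ kroneckerVec φ χ = kroneckerVec φ' χ' := by
  rw [star_kroneckerVec, kroneckerVec_dotProduct_kroneckerVec] at h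
  set r := (star φ ⬝ᵥ φ).re
  have hr : star φ ⬝ᵥ φ = r :=
    Complex.eq_re_of_ofReal_le (r := 0) (by exact_mod_cast dotProduct_star_self_nonneg φ)
  have hr0 : 0 < r := by
    refine lt_of_le_of_ne (Complex.nonneg_iff.mp (dotProduct_star_self_nonneg φ)).1 fun h0 => ?_
    rw [hr, ← h0] at h
    simp at h
  set s := √r
  have hs : (s : ℂ) ≠ 0 := by exact_mod_cast (Real.sqrt_pos.mpr hr0).ne'
  have hss : (s : ℂ) * s = r := by exact_mod_cast Real.mul_self_sqrt hr0.le
  refine ⟨(s : ℂ)⁻¹ • φ, (s : ℂ) • χ, ?_, ?_, (kroneckerVec_inv_smul_smul hs φ χ).symm⟩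
  · simp only [star_smul, smul_dotProduct, dotProduct_smul, hr, RCLike.star_def,
      map_inv₀, Complex.conj_ofReal, smul_eq_mul]
    rw [← hss]
    field_simp
  · simp only [star_smul, smul_dotProduct, dotProduct_smul, RCLike.star_def,
      Complex.conj_ofReal, smul_eq_mul]
    rw [← mul_assoc, hss, ← hr, h]

end Matrix

section UnitVector

variable {m : Type*} [Fintype m] {φ : m → ℂ}

lemma posSemidef_one_sub_vecMulVec_self_star [DecidableEq m] (hφ : star φ ⬝ᵥ φ = 1) :
    (1 - vecMulVec φ (star φ)).PosSemidef := by
  have hP : (vecMulVec φ (star φ))ᴴ = vecMulVec φ (star φ) := by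
    rw [conjTranspose_vecMulVec, star_star]
  have hQ : (1 - vecMulVec φ (star φ))ᴴ * (1 - vecMulVec φ (star φ))
      = 1 - vecMulVec φ (star φ) := by
    rw [conjTranspose_sub, conjTranspose_one, hP, sub_mul, mul_sub, mul_sub, one_mul, mul_one,
      one_mul, vecMulVec_self_star_mul_self hφ, sub_self, sub_zero]
  exact hQ ▸ posSemidef_conjTranspose_mul_self _

lemma indecomposable_inv_natCast_smul_vecMulVec {n : ℕ} (hn : n ≠ 0) (hφ : star φ ⬝ᵥ φ = 1) :
    Indecomposable ((n : ℂ)⁻¹ • vecMulVec φ (star φ)) :=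
  ⟨(n : ℝ)⁻¹, φ, by positivity,
    inv_le_one_of_one_le₀ (by exact_mod_cast Nat.one_le_iff_ne_zero.mpr hn), hφ, by push_cast; rfl⟩

end UnitVector

section PartialTrace

variable {n₁ n₂ : Type*}

lemma ptrace2_kronecker [Fintype n₂] (A : Matrix n₁ n₁ ℂ) (B : Matrix n₂ n₂ ℂ) :
    ptrace2 (A ⊗ₖ B) = B.trace • A := by
  ext i j
  simp [ptrace2, trace, Finset.mul_sum, mul_comm]

lemma ptrace1_kronecker [Fintype n₁] (A : Matrix n₁ n₁ ℂ) (B : Matrix n₂ n₂ ℂ) :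
    ptrace1 (A ⊗ₖ B) = A.trace • B := by
  ext k l
  simp [ptrace1, trace, Finset.sum_mul]

lemma trace_ptrace2 [Fintype n₁] [Fintype n₂] (a : Matrix (n₁ × n₂) (n₁ × n₂) ℂ) :
    (ptrace2 a).trace = a.trace := by
  simp [ptrace2, trace, Fintype.sum_prod_type]

lemma ptrace2_vecMulVec_self_star [Fintype n₂] (ψ : n₁ × n₂ → ℂ) :
    ptrace2 (vecMulVec ψ (star ψ)) = of (Function.curry ψ) * (of (Function.curry ψ))ᴴ := by
  ext i j
  simp [ptrace2, mul_apply, vecMulVec_apply]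

lemma exists_kroneckerVec_of_ptrace2_eq [Fintype n₁] [Fintype n₂]
    [DecidableEq n₁] {ψ : n₁ × n₂ → ℂ} {φ : n₁ → ℂ} (hφ : star φ ⬝ᵥ φ = 1)
    (h : ptrace2 (vecMulVec ψ (star ψ)) = vecMulVec φ (star φ)) :
    ∃ χ, ψ = kroneckerVec φ χ := by
  rw [ptrace2_vecMulVec_self_star] at h
  set Ψ := of (Function.curry ψ)
  have hΨ : (1 - vecMulVec φ (star φ)) * Ψ = 0 := by
    refine (mul_self_mul_conjTranspose_eq_zero Ψ _).mp ?_
    rw [h, sub_mul, one_mul, vecMulVec_self_star_mul_self hφ, sub_self]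
  rw [Matrix.sub_mul, Matrix.one_mul, sub_eq_zero, vecMulVec_mul] at hΨ
  exact ⟨star φ ᵥ* Ψ, funext fun ⟨i, k⟩ => congrFun (congrFun hΨ i) k⟩

end PartialTrace

/-- An atom `a = |ψ⟩⟨ψ|` on `H1 ⊗ H2` is factorized if and only if both
reduced effects `a^1` and `a^2` are indecomposable. -/
theorem stmt_9 {n₁ n₂ : Type*} [Fintype n₁] [Fintype n₂] [DecidableEq n₁] [DecidableEq n₂]
    (ψ : n₁ × n₂ → ℂ) (hψ : star ψ ⬝ᵥ ψ = 1)
    (a : Matrix (n₁ × n₂) (n₁ × n₂) ℂ) (ha : a = Matrix.vecMulVec ψ (star ψ)) :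
    (∃ (b : Matrix n₁ n₁ ℂ) (c : Matrix n₂ n₂ ℂ),
        b.PosSemidef ∧ (1 - b).PosSemidef ∧ c.PosSemidef ∧ (1 - c).PosSemidef ∧
        a = b ⊗ₖ c)
    ↔ (Indecomposable ((Fintype.card n₂ : ℂ)⁻¹ • ptrace2 a) ∧
        Indecomposable ((Fintype.card n₁ : ℂ)⁻¹ • ptrace1 a)) := by
  subst ha
  have hψ0 : ψ ≠ 0 := by
    rintro rfl
    simp at hψ
  obtain ⟨⟨i, k⟩, -⟩ := Function.ne_iff.mp hψ0
  have hn₁ : Fintype.card n₁ ≠ 0 := haveI : Nonempty n₁ := ⟨i⟩; Fintype.card_ne_zero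
  have hn₂ : Fintype.card n₂ ≠ 0 := haveI : Nonempty n₂ := ⟨k⟩; Fintype.card_ne_zero
  constructor
  · rintro ⟨b, c, -, -, -, -, h⟩
    obtain ⟨φ, χ, rfl⟩ := exists_kroneckerVec_of_vecMulVec_eq_kronecker hψ0 h
    obtain ⟨φ, χ, hφ, hχ, hφχ⟩ := exists_unit_kroneckerVec hψ
    rw [hφχ, star_kroneckerVec, vecMulVec_kroneckerVec, ptrace2_kronecker, ptrace1_kronecker,
      trace_vecMulVec_self_star, trace_vecMulVec_self_star, hφ, hχ, one_smul, one_smul]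
    exact ⟨indecomposable_inv_natCast_smul_vecMulVec hn₂ hφ,
      indecomposable_inv_natCast_smul_vecMulVec hn₁ hχ⟩
  · rintro ⟨⟨t, φ, -, -, hφ, h⟩, -⟩
    have hP : ptrace2 (vecMulVec ψ (star ψ)) = vecMulVec φ (star φ) :=
      eq_of_smul_eq_smul_of_trace_eq_one (inv_ne_zero (Nat.cast_ne_zero.mpr hn₂))
        (by rw [trace_ptrace2, trace_vecMulVec_self_star, hψ])
        (by rw [trace_vecMulVec_self_star, hφ]) h
    obtain ⟨χ, rfl⟩ := exists_kroneckerVec_of_ptrace2_eq hφ hP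
    have hχ : star χ ⬝ᵥ χ = 1 := by
      rwa [star_kroneckerVec, kroneckerVec_dotProduct_kroneckerVec, hφ, one_mul] at hψ
    exact ⟨_, _, posSemidef_vecMulVec_self_star φ, posSemidef_one_sub_vecMulVec_self_star hφ,
      posSemidef_vecMulVec_self_star χ, posSemidef_one_sub_vecMulVec_self_star hχ,
      by rw [star_kroneckerVec, vecMulVec_kroneckerVec]⟩
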